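/- arXiv:1110.0422 — 5 statements merged into one kernel-verified Lean document; each statement's English description precedes it below -/
import Mathlib

section
/- Let α, β : [0,∞) → ℝ be càdlàg functions with α_t ≤ β_t for all t and inf_{t≥0}(β_t − α_t) > 0, and let T > 0. Then for every pair of càdlàg functions x, x' : [0,∞) → ℝ one has sup_{0≤t≤T} |Ξ_{α,β}(x)_t − Ξ_{α,β}(x')_t| ≤ 2 · sup_{0≤t≤T} |x_t − x'_t|. -/
open Set

/-- A real function on `[0,∞)` is càdlàg: right-continuous at every `t ≥ 0`
and with finite left limits at every `t > 0`. -/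
def Cadlag (f : ℝ → ℝ) : Prop :=
  (∀ t : ℝ, 0 ≤ t → ContinuousWithinAt f (Set.Ici t) t) ∧
  (∀ t : ℝ, 0 < t → ∃ l : ℝ, Filter.Tendsto f (nhdsWithin t (Set.Iio t)) (nhds l))

/-- The reflection term `Ξ_{α,β}(x)` of the extended Skorohod map. -/
noncomputable def Xi (α β x : ℝ → ℝ) (t : ℝ) : ℝ :=
  max (min (max (x 0 - β 0) 0) (sInf ((fun r => x r - α r) '' Set.Icc 0 t)))
    (sSup ((fun s => min (max (x s - β s) 0) (sInf ((fun r => x r - α r) '' Set.Icc s t))) ''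
      Set.Icc 0 t))

/-- The extended Skorohod map `Γ_{α,β}(x)_t = x_t - Ξ_{α,β}(x)_t`. -/
noncomputable def Gamma (α β x : ℝ → ℝ) (t : ℝ) : ℝ := x t - Xi α β x t

/-- `H_{α,β}(x)_t = sup_{0≤s≤t} { (x_s - β_s) ∧ inf_{s≤r≤t} (x_r - α_r) }`. -/
noncomputable def Hmap (α β x : ℝ → ℝ) (t : ℝ) : ℝ :=
  sSup ((fun s => min (x s - β s) (sInf ((fun r => x r - α r) '' Set.Icc s t))) '' Set.Icc 0 t)

/-- `J_{α,β}(x)_t = inf_{0≤s≤t} { (x_s - α_s) ∨ sup_{s≤r≤t} (x_r - β_r) }`. -/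
noncomputable def Jmap (α β x : ℝ → ℝ) (t : ℝ) : ℝ :=
  sInf ((fun s => max (x s - α s) (sSup ((fun r => x r - β r) '' Set.Icc s t))) '' Set.Icc 0 t)

/-- The hitting time `T_α = inf { t > 0 : α_t - x_t ≥ 0 }`, with `inf ∅ = +∞`,
as an extended real number. -/
noncomputable def hitLower (α x : ℝ → ℝ) : EReal :=
  sInf ((fun t : ℝ => (t : EReal)) '' {t : ℝ | 0 < t ∧ 0 ≤ α t - x t})

/-- The hitting time `T^β = inf { t > 0 : x_t - β_t ≥ 0 }`, with `inf ∅ = +∞`,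
as an extended real number. -/
noncomputable def hitUpper (β x : ℝ → ℝ) : EReal :=
  sInf ((fun t : ℝ => (t : EReal)) '' {t : ℝ | 0 < t ∧ 0 ≤ x t - β t})


lemma cadlag_bounded (f : ℝ → ℝ) (hf : Cadlag f) (T : ℝ) :
    ∃ C : ℝ, ∀ t ∈ Set.Icc (0:ℝ) T, |f t| ≤ C := by
  have hK : IsCompact (Set.Icc (0:ℝ) T) := isCompact_Icc
  refine hK.induction_on (p := fun s => ∃ C : ℝ, ∀ t ∈ s, |f t| ≤ C) ⟨0, by simp⟩
    (fun s t hst ⟨C, hC⟩ => ⟨C, fun u hu => hC u (hst hu)⟩)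
    (fun s t ⟨C, hC⟩ ⟨D, hD⟩ => ⟨max C D, fun u hu => by
      rcases hu with hu | hu
      · exact le_trans (hC u hu) (le_max_left _ _)
      · exact le_trans (hD u hu) (le_max_right _ _)⟩) ?_
  intro u hu
  have hu0 : (0:ℝ) ≤ u := hu.1
  -- right bound from right continuity
  have hrt : Filter.Tendsto f (nhdsWithin u (Set.Ici u)) (nhds (f u)) := hf.1 u hu0
  have hA : {y : ℝ | |f y| ≤ |f u| + 1} ∈ nhdsWithin u (Set.Ici u) := by
    have := hrt (Metric.closedBall_mem_nhds (f u) one_pos)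
    refine Filter.mem_of_superset this ?_
    intro y hy
    simp only [Set.mem_preimage, Metric.mem_closedBall, Real.dist_eq] at hy
    have := abs_sub_abs_le_abs_sub (f y) (f u)
    simp only [Set.mem_setOf_eq]
    linarith
  rcases eq_or_lt_of_le hu0 with h0 | h0
  · refine ⟨{y : ℝ | |f y| ≤ |f u| + 1}, ?_, ⟨|f u| + 1, fun t ht => ht⟩⟩
    refine nhdsWithin_mono u ?_ hA
    intro y hy
    rw [← h0]
    exact hy.1
  · obtain ⟨l, hl⟩ := hf.2 u h0
    have hB : {y : ℝ | |f y| ≤ |l| + 1} ∈ nhdsWithin u (Set.Iio u) := by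
      have := hl (Metric.closedBall_mem_nhds l one_pos)
      refine Filter.mem_of_superset this ?_
      intro y hy
      simp only [Set.mem_preimage, Metric.mem_closedBall, Real.dist_eq] at hy
      have := abs_sub_abs_le_abs_sub (f y) l
      simp only [Set.mem_setOf_eq]
      linarith
    set C : ℝ := max (|f u| + 1) (|l| + 1) with hC
    refine ⟨{y : ℝ | |f y| ≤ C}, ?_, ⟨C, fun t ht => ht⟩⟩
    have h1 : {y : ℝ | |f y| ≤ C} ∈ nhdsWithin u (Set.Ici u) :=
      Filter.mem_of_superset hA (fun y hy => by
        simp only [Set.mem_setOf_eq] at hy ⊢; exact le_trans hy (le_max_left _ _))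
    have h2 : {y : ℝ | |f y| ≤ C} ∈ nhdsWithin u (Set.Iio u) :=
      Filter.mem_of_superset hB (fun y hy => by
        simp only [Set.mem_setOf_eq] at hy ⊢; exact le_trans hy (le_max_right _ _))
    have huniv : Set.Iio u ∪ Set.Ici u = Set.univ := Set.Iio_union_Ici
    have h3 : {y : ℝ | |f y| ≤ C} ∈ nhds u := by
      have := nhdsWithin_union u (Set.Iio u) (Set.Ici u)
      rw [huniv, nhdsWithin_univ] at this
      rw [this]
      exact Filter.mem_sup.mpr ⟨h2, h1⟩
    exact mem_nhdsWithin_of_mem_nhds h3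

lemma abs_sInf_image_sub (f g : ℝ → ℝ) (S : Set ℝ) (M : ℝ) (hM : 0 ≤ M)
    (h : ∀ s ∈ S, |f s - g s| ≤ M) :
    |sInf (f '' S) - sInf (g '' S)| ≤ M := by
  rcases S.eq_empty_or_nonempty with rfl | hS
  · simpa [Real.sInf_empty] using hM
  by_cases hb : BddBelow (f '' S)
  · have hb' : BddBelow (g '' S) := by
      obtain ⟨b, hbb⟩ := hb
      refine ⟨b - M, ?_⟩
      rintro y ⟨s, hs, rfl⟩
      have h1 : b ≤ f s := hbb ⟨s, hs, rfl⟩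
      have h2 := abs_le.mp (h s hs)
      linarith [h2.1, h2.2]
    rw [abs_sub_le_iff]
    constructor
    · have key : sInf (f '' S) - M ≤ sInf (g '' S) := by
        apply le_csInf (hS.image g)
        rintro y ⟨s, hs, rfl⟩
        have h1 : sInf (f '' S) ≤ f s := csInf_le hb ⟨s, hs, rfl⟩
        have h2 := abs_le.mp (h s hs)
        linarith [h2.1, h2.2]
      linarith
    · have key : sInf (g '' S) - M ≤ sInf (f '' S) := by
        apply le_csInf (hS.image f)
        rintro y ⟨s, hs, rfl⟩
        have h1 : sInf (g '' S) ≤ g s := csInf_le hb' ⟨s, hs, rfl⟩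
        have h2 := abs_le.mp (h s hs)
        linarith [h2.1, h2.2]
      linarith
  · have hb' : ¬ BddBelow (g '' S) := by
      intro hg
      apply hb
      obtain ⟨b, hbb⟩ := hg
      refine ⟨b - M, ?_⟩
      rintro y ⟨s, hs, rfl⟩
      have h1 : b ≤ g s := hbb ⟨s, hs, rfl⟩
      have h2 := abs_le.mp (h s hs)
      linarith [h2.1, h2.2]
    rw [Real.sInf_of_not_bddBelow hb, Real.sInf_of_not_bddBelow hb']
    simpa using hM

lemma abs_sSup_image_sub (f g : ℝ → ℝ) (S : Set ℝ) (M : ℝ) (hM : 0 ≤ M)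
    (h : ∀ s ∈ S, |f s - g s| ≤ M) :
    |sSup (f '' S) - sSup (g '' S)| ≤ M := by
  rcases S.eq_empty_or_nonempty with rfl | hS
  · simpa [Real.sSup_empty] using hM
  by_cases hb : BddAbove (f '' S)
  · have hb' : BddAbove (g '' S) := by
      obtain ⟨b, hbb⟩ := hb
      refine ⟨b + M, ?_⟩
      rintro y ⟨s, hs, rfl⟩
      have h1 : f s ≤ b := hbb ⟨s, hs, rfl⟩
      have h2 := abs_le.mp (h s hs)
      linarith [h2.1, h2.2]
    rw [abs_sub_le_iff]
    constructor
    · have key : sSup (f '' S) ≤ sSup (g '' S) + M := by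
        apply csSup_le (hS.image f)
        rintro y ⟨s, hs, rfl⟩
        have h1 : g s ≤ sSup (g '' S) := le_csSup hb' ⟨s, hs, rfl⟩
        have h2 := abs_le.mp (h s hs)
        linarith [h2.1, h2.2]
      linarith
    · have key : sSup (g '' S) ≤ sSup (f '' S) + M := by
        apply csSup_le (hS.image g)
        rintro y ⟨s, hs, rfl⟩
        have h1 : f s ≤ sSup (f '' S) := le_csSup hb ⟨s, hs, rfl⟩
        have h2 := abs_le.mp (h s hs)
        linarith [h2.1, h2.2]
      linarith
  · have hb' : ¬ BddAbove (g '' S) := by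
      intro hg
      apply hb
      obtain ⟨b, hbb⟩ := hg
      refine ⟨b + M, ?_⟩
      rintro y ⟨s, hs, rfl⟩
      have h1 : g s ≤ b := hbb ⟨s, hs, rfl⟩
      have h2 := abs_le.mp (h s hs)
      linarith [h2.1, h2.2]
    rw [Real.sSup_of_not_bddAbove hb, Real.sSup_of_not_bddAbove hb']
    simpa using hM

/-- The reflection term `Ξ_{α,β}` is Lipschitz with constant 2 in the
sup norm on `[0,T]`. -/
theorem xi_lipschitz_two (α β x x' : ℝ → ℝ)
    (hα : Cadlag α) (hβ : Cadlag β) (hx : Cadlag x) (hx' : Cadlag x')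
    (hle : ∀ t : ℝ, 0 ≤ t → α t ≤ β t)
    (hgap : 0 < sInf ((fun t => β t - α t) '' Set.Ici (0 : ℝ)))
    (T : ℝ) (hT : 0 < T) :
    sSup ((fun t => |Xi α β x t - Xi α β x' t|) '' Set.Icc 0 T) ≤
      2 * sSup ((fun t => |x t - x' t|) '' Set.Icc 0 T) := by
  set M : ℝ := sSup ((fun t => |x t - x' t|) '' Set.Icc 0 T) with hMdef
  have hM0 : 0 ≤ M := Real.sSup_nonneg (by rintro v ⟨t, ht, rfl⟩; exact abs_nonneg _)
  -- pointwise bound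
  obtain ⟨Cx, hCx⟩ := cadlag_bounded x hx T
  obtain ⟨Cx', hCx'⟩ := cadlag_bounded x' hx' T
  have hbd : BddAbove ((fun t => |x t - x' t|) '' Set.Icc 0 T) := by
    refine ⟨Cx + Cx', ?_⟩
    rintro v ⟨t, ht, rfl⟩
    calc |x t - x' t| ≤ |x t| + |x' t| := abs_sub _ _
      _ ≤ Cx + Cx' := add_le_add (hCx t ht) (hCx' t ht)
  have hMpt : ∀ r ∈ Set.Icc (0:ℝ) T, |x r - x' r| ≤ M := fun r hr =>
    le_csSup hbd ⟨r, hr, rfl⟩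
  -- bound for each t
  have hmain : ∀ t ∈ Set.Icc (0:ℝ) T, |Xi α β x t - Xi α β x' t| ≤ M := by
    intro t ht
    have hsub : ∀ s ∈ Set.Icc (0:ℝ) t, s ∈ Set.Icc (0:ℝ) T := fun s hs =>
      ⟨hs.1, le_trans hs.2 ht.2⟩
    -- inf difference over Icc s t for any s ≥ 0
    have hinf : ∀ s : ℝ, 0 ≤ s →
        |sInf ((fun r => x r - α r) '' Set.Icc s t) -
          sInf ((fun r => x' r - α r) '' Set.Icc s t)| ≤ M := by
      intro s hs0
      apply abs_sInf_image_sub _ _ _ _ hM0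
      intro r hr
      have : (x r - α r) - (x' r - α r) = x r - x' r := by ring
      rw [this]
      exact hMpt r ⟨le_trans hs0 hr.1, le_trans hr.2 ht.2⟩
    -- first component
    have hA : |min (max (x 0 - β 0) 0) (sInf ((fun r => x r - α r) '' Set.Icc 0 t)) -
        min (max (x' 0 - β 0) 0) (sInf ((fun r => x' r - α r) '' Set.Icc 0 t))| ≤ M := by
      refine le_trans (abs_min_sub_min_le_max _ _ _ _) (max_le ?_ (hinf 0 le_rfl))
      refine le_trans (abs_max_sub_max_le_max _ _ _ _) (max_le ?_ (by simpa using hM0))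
      have : (x 0 - β 0) - (x' 0 - β 0) = x 0 - x' 0 := by ring
      rw [this]
      exact hMpt 0 ⟨le_rfl, le_of_lt hT⟩
    -- second component
    have hB : |sSup ((fun s => min (max (x s - β s) 0)
          (sInf ((fun r => x r - α r) '' Set.Icc s t))) '' Set.Icc 0 t) -
        sSup ((fun s => min (max (x' s - β s) 0)
          (sInf ((fun r => x' r - α r) '' Set.Icc s t))) '' Set.Icc 0 t)| ≤ M := by
      apply abs_sSup_image_sub _ _ _ _ hM0
      intro s hs
      refine le_trans (abs_min_sub_min_le_max _ _ _ _) (max_le ?_ (hinf s hs.1))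
      refine le_trans (abs_max_sub_max_le_max _ _ _ _) (max_le ?_ (by simpa using hM0))
      have : (x s - β s) - (x' s - β s) = x s - x' s := by ring
      rw [this]
      exact hMpt s (hsub s hs)
    simp only [Xi]
    exact le_trans (abs_max_sub_max_le_max _ _ _ _) (max_le hA hB)
  apply Real.sSup_le
  · rintro v ⟨t, ht, rfl⟩
    have := hmain t ht
    linarith
  · linarith
end

section
/- Let α, β : [0,∞) → ℝ be càdlàg functions with α_t ≤ β_t for all t and inf_{t≥0}(β_t − α_t) > 0, and let x : [0,∞) → ℝ be càdlàg. Then the extended Skorohod map keeps the path between the barriers: α_t ≤ Γ_{α,β}(x)_t ≤ β_t for every t ≥ 0. -/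
open Set

/-- A càdlàg function is bounded on `[0, b]`. -/
lemma cadlag_bddAbs (f : ℝ → ℝ) (hf : Cadlag f) (b : ℝ) :
    ∃ M : ℝ, ∀ s ∈ Set.Icc (0:ℝ) b, |f s| ≤ M := by
  have hcomp : IsCompact (Set.Icc (0:ℝ) b) := isCompact_Icc
  refine hcomp.induction_on (p := fun S => ∃ M : ℝ, ∀ y ∈ S, |f y| ≤ M)
    ⟨0, by simp⟩ ?_ ?_ ?_
  · rintro S T hST ⟨M, hM⟩
    exact ⟨M, fun y hy => hM y (hST hy)⟩
  · rintro S T ⟨M, hM⟩ ⟨N, hN⟩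
    refine ⟨max M N, fun y hy => ?_⟩
    rcases hy with h | h
    · exact (hM y h).trans (le_max_left _ _)
    · exact (hN y h).trans (le_max_right _ _)
  · intro s0 hs0
    have hball : ∀ c : ℝ, ∀ᶠ z in nhds c, |z| ≤ |c| + 1 := by
      intro c
      have hmem : Metric.closedBall c 1 ∈ nhds c := Metric.closedBall_mem_nhds _ one_pos
      filter_upwards [hmem] with z hz
      rw [Metric.mem_closedBall, Real.dist_eq] at hz
      have := abs_sub_abs_le_abs_sub z c
      linarith
    have hr : Filter.Tendsto f (nhdsWithin s0 (Set.Ici s0)) (nhds (f s0)) := hf.1 s0 hs0.1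
    have hre : ∀ᶠ y in nhdsWithin s0 (Set.Ici s0), |f y| ≤ |f s0| + 1 :=
      hr.eventually (hball (f s0))
    rcases eq_or_lt_of_le hs0.1 with h0 | hpos
    · -- s0 = 0
      refine ⟨{y | |f y| ≤ |f s0| + 1}, ?_, ⟨|f s0| + 1, fun y hy => hy⟩⟩
      have h1 : {y | |f y| ≤ |f s0| + 1} ∈ nhdsWithin s0 (Set.Ici s0) := hre
      refine nhdsWithin_mono s0 ?_ h1
      intro y hy
      rw [← h0]
      exact hy.1
    · -- 0 < s0 : use the left limit as well
      obtain ⟨l, hl⟩ := hf.2 s0 hpos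
      have hleft : ∀ᶠ y in nhdsWithin s0 (Set.Iio s0), |f y| ≤ |l| + 1 :=
        hl.eventually (hball l)
      set M : ℝ := max (|f s0| + 1) (|l| + 1) with hM
      have h1 : {y | |f y| ≤ M} ∈ nhdsWithin s0 (Set.Ici s0) := by
        filter_upwards [hre] with y hy
        exact hy.trans (le_max_left _ _)
      have h2 : {y | |f y| ≤ M} ∈ nhdsWithin s0 (Set.Iio s0) := by
        filter_upwards [hleft] with y hy
        exact hy.trans (le_max_right _ _)
      have hnhds : {y | |f y| ≤ M} ∈ nhds s0 := by
        have hsup : {y | |f y| ≤ M} ∈ nhdsWithin s0 (Set.Iio s0) ⊔ nhdsWithin s0 (Set.Ici s0) :=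
          Filter.mem_sup.mpr ⟨h2, h1⟩
        rwa [← nhdsWithin_union, Set.Iio_union_Ici, nhdsWithin_univ] at hsup
      exact ⟨{y | |f y| ≤ M}, nhdsWithin_le_nhds hnhds, ⟨M, fun y hy => hy⟩⟩

/-- The extended Skorohod map keeps the path between the two barriers:
`α_t ≤ Γ_{α,β}(x)_t ≤ β_t` for all `t ≥ 0`. -/
theorem gamma_mem_barriers (α β x : ℝ → ℝ)
    (hα : Cadlag α) (hβ : Cadlag β) (hx : Cadlag x)
    (hle : ∀ t : ℝ, 0 ≤ t → α t ≤ β t)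
    (hgap : 0 < sInf ((fun t => β t - α t) '' Set.Ici (0 : ℝ)))
    (t : ℝ) (ht : 0 ≤ t) :
    α t ≤ Gamma α β x t ∧ Gamma α β x t ≤ β t := by
  obtain ⟨Mx, hMx⟩ := cadlag_bddAbs x hx t
  obtain ⟨Ma, hMa⟩ := cadlag_bddAbs α hα t
  set g : ℝ → ℝ := fun r => x r - α r with hg
  have h0t : (0:ℝ) ∈ Set.Icc (0:ℝ) t := ⟨le_refl 0, ht⟩
  have htt : t ∈ Set.Icc (0:ℝ) t := ⟨ht, le_refl t⟩
  have hbdd : ∀ s ∈ Set.Icc (0:ℝ) t, BddBelow (g '' Set.Icc s t) := by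
    intro s hs
    refine ⟨-(Mx + Ma), ?_⟩
    rintro _ ⟨r, hr, rfl⟩
    have hr' : r ∈ Set.Icc (0:ℝ) t := ⟨hs.1.trans hr.1, hr.2⟩
    have h1 := abs_le.mp (hMx r hr')
    have h2 := abs_le.mp (hMa r hr')
    simp only [hg]
    linarith [h1.1, h2.2]
  have hInf_le : ∀ s ∈ Set.Icc (0:ℝ) t, sInf (g '' Set.Icc s t) ≤ g t := by
    intro s hs
    exact csInf_le (hbdd s hs) ⟨t, ⟨hs.2, le_refl t⟩, rfl⟩
  set h : ℝ → ℝ := fun s => min (max (x s - β s) 0) (sInf (g '' Set.Icc s t)) with hh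
  have hh_le : ∀ s ∈ Set.Icc (0:ℝ) t, h s ≤ g t := by
    intro s hs
    exact (min_le_right _ _).trans (hInf_le s hs)
  have hbddA : BddAbove (h '' Set.Icc 0 t) := by
    refine ⟨g t, ?_⟩
    rintro _ ⟨s, hs, rfl⟩
    exact hh_le s hs
  have hBle : sSup (h '' Set.Icc 0 t) ≤ g t := by
    refine csSup_le ⟨h 0, 0, h0t, rfl⟩ ?_
    rintro _ ⟨s, hs, rfl⟩
    exact hh_le s hs
  have hht : x t - β t ≤ h t := by
    have hIcc : Set.Icc t t = {t} := Set.Icc_self t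
    have : sInf (g '' Set.Icc t t) = g t := by
      rw [hIcc, Set.image_singleton, csInf_singleton]
    rw [hh]
    simp only [this]
    refine le_min (le_max_left _ _) ?_
    have := hle t ht
    simp only [hg]
    linarith
  have hBge : x t - β t ≤ sSup (h '' Set.Icc 0 t) :=
    hht.trans (le_csSup hbddA ⟨t, htt, rfl⟩)
  have hA_le : min (max (x 0 - β 0) 0) (sInf (g '' Set.Icc 0 t)) ≤ g t :=
    (min_le_right _ _).trans (hInf_le 0 h0t)
  have hXi_le : Xi α β x t ≤ g t := by
    rw [Xi]
    exact max_le hA_le hBle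
  have hXi_ge : x t - β t ≤ Xi α β x t := by
    rw [Xi]
    exact hBge.trans (le_max_right _ _)
  constructor
  · have : Xi α β x t ≤ x t - α t := hXi_le
    rw [Gamma]; linarith
  · rw [Gamma]; linarith
end

section
/- Let α, β : [0,∞) → ℝ be càdlàg functions with α_t ≤ β_t for all t and inf_{t≥0}(β_t − α_t) > 0, and let x : [0,∞) → ℝ be càdlàg. If (y, η) and (y', η') are both solutions of the Skorohod problem on [α, β] for x, then y_t = y'_t and η_t = η'_t for all t ≥ 0 (uniqueness of the Skorohod problem with two time-dependent boundaries). -/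
/-!
Comparison argument. With `η = ηˡ - ηᵘ` and `η' = ηˡ' - ηᵘ'`, the difference `y - y'` equals
`f - g` for the Stieltjes functions `f = ηˡ + ηᵘ'` and `g = ηᵘ + ηˡ'`. The minimality conditions say
that `f` only increases where `y = α ≤ y'` or `y' = β ≥ y`, i.e. never on `{y > y'}`. Starting from
`f 0 = g 0 = 0`, the difference `f - g` can then never become positive: on an interval after the
last time `τ` it was nonpositive, `f` is constant while `g` grows, and a jump of `f - g` at `τ`
itself is excluded because `f` has no atom there. So `y ≤ y'`, and by symmetry `y = y'`.
-/

open Set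

/-- `(y, η)` is a solution of the Skorohod problem on `[α, β]` for `x`:
`y = x + η` stays in `[α, β]`; `η` is càdlàg of (locally) bounded variation with
`η(0⁻) = 0`, decomposed as `η = ηˡ - ηᵘ` with `ηˡ, ηᵘ` nondecreasing
right-continuous functions vanishing on `(-∞, 0]` (so starting from `0`),
whose Lebesgue–Stieltjes measures put no mass on `{y > α}` and `{y < β}`
respectively (the Skorohod minimality conditions). -/
def IsSkorohodSolution (α β x y η : ℝ → ℝ) : Prop :=
  Cadlag y ∧ Cadlag η ∧
  (∀ t : ℝ, 0 ≤ t → y t = x t + η t ∧ α t ≤ y t ∧ y t ≤ β t) ∧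
  ∃ ηl ηu : StieltjesFunction ℝ,
    (∀ t : ℝ, t ≤ 0 → ηl t = 0) ∧
    (∀ t : ℝ, t ≤ 0 → ηu t = 0) ∧
    (∀ t : ℝ, 0 ≤ t → η t = ηl t - ηu t) ∧
    ηu.measure {s : ℝ | 0 ≤ s ∧ y s < β s} = 0 ∧
    ηl.measure {s : ℝ | 0 ≤ s ∧ α s < y s} = 0


open Filter Topology

namespace StieltjesFunction

variable (f g : StieltjesFunction ℝ)

lemma sub_le_sub_of_measure_Ioc_eq_zero {s t : ℝ} (hst : s ≤ t) (h : f.measure (Ioc s t) = 0) :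
    f t - g t ≤ f s - g s := by
  rw [measure_Ioc, ENNReal.ofReal_eq_zero] at h
  linarith [g.mono hst]

lemma sub_le_leftLim_sub_of_measure_Icc_eq_zero {s t : ℝ} (hst : s ≤ t)
    (h : f.measure (Icc s t) = 0) :
    f t - g t ≤ Function.leftLim f s - Function.leftLim g s := by
  rw [measure_Icc, ENNReal.ofReal_eq_zero] at h
  linarith [g.mono.leftLim_le hst]

lemma tendsto_sub_nhdsLT (s : ℝ) :
    Tendsto (fun u => f u - g u) (𝓝[<] s) (𝓝 (Function.leftLim f s - Function.leftLim g s)) :=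
  (f.mono.tendsto_leftLim s).sub (g.mono.tendsto_leftLim s)

theorem le_of_measure_lt_eq_zero {a t : ℝ} (ha : f a ≤ g a) (hat : a ≤ t)
    (hf : f.measure {s | a ≤ s ∧ g s < f s} = 0) : f t ≤ g t := by
  set S := {s | s ≤ t ∧ f s ≤ g s}
  have hSne : S.Nonempty := ⟨a, hat, ha⟩
  have hτ : IsLUB S (sSup S) := isLUB_csSup hSne ⟨t, fun s hs => hs.1⟩
  set τ := sSup S
  have haτ : a ≤ τ := hτ.1 ⟨hat, ha⟩
  have hτt : τ ≤ t := hτ.2 fun s hs => hs.1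
  have hgt : ∀ s ∈ Ioc τ t, g s < f s := fun s hs =>
    lt_of_not_ge fun hle => (hτ.1 ⟨hs.2, hle⟩).not_gt hs.1
  rcases le_or_gt (f τ) (g τ) with hτle | hτgt
  · have hnull : f.measure (Ioc τ t) = 0 := by
      refine MeasureTheory.measure_mono_null (fun s hs => ?_) hf
      exact ⟨haτ.trans hs.1.le, hgt s hs⟩
    linarith [f.sub_le_sub_of_measure_Ioc_eq_zero g hτt hnull]
  · have hnull : f.measure (Icc τ t) = 0 := by
      refine MeasureTheory.measure_mono_null (fun s hs => ?_) hf
      refine ⟨haτ.trans hs.1, ?_⟩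
      rcases hs.1.eq_or_lt with rfl | hlt
      · exact hτgt
      · exact hgt s ⟨hlt, hs.2⟩
    -- `τ ∉ S`, so `S` accumulates at `τ` from the left, where `f - g ≤ 0`
    have hfreq : ∃ᶠ s in 𝓝[<] τ, f s - g s ≤ 0 := by
      have := hτ.frequently_mem hSne
      rw [← Iio_insert, nhdsWithin_insert, frequently_sup, frequently_pure] at this
      exact (this.resolve_left fun h => hτgt.not_ge h.2).mono fun s hs => sub_nonpos.2 hs.2
    linarith [f.sub_le_leftLim_sub_of_measure_Icc_eq_zero g hτt hnull,
      le_of_tendsto_of_frequently (f.tendsto_sub_nhdsLT g τ) hfreq]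

end StieltjesFunction

theorem IsSkorohodSolution.le {α β x y η y' η' : ℝ → ℝ}
    (hsol : IsSkorohodSolution α β x y η) (hsol' : IsSkorohodSolution α β x y' η')
    {t : ℝ} (ht : 0 ≤ t) : y t ≤ y' t := by
  obtain ⟨-, -, hy, ηl, ηu, hl0, hu0, hη, -, hl⟩ := hsol
  obtain ⟨-, -, hy', ηl', ηu', hl0', hu0', hη', hu', -⟩ := hsol'
  have hdiff : ∀ s, 0 ≤ s → y s - y' s = (ηl + ηu') s - (ηu + ηl') s := fun s hs => by
    simp only [StieltjesFunction.add_apply]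
    linarith [(hy s hs).1, (hy' s hs).1, hη s hs, hη' s hs]
  have hnull : (ηl + ηu').measure {s | 0 ≤ s ∧ (ηu + ηl') s < (ηl + ηu') s} = 0 := by
    rw [StieltjesFunction.measure_add, MeasureTheory.Measure.add_apply, add_eq_zero]
    constructor
    · refine MeasureTheory.measure_mono_null (fun s ⟨hs, hlt⟩ => ?_) hl
      refine ⟨hs, ?_⟩
      linarith [hdiff s hs, (hy' s hs).2.1]
    · refine MeasureTheory.measure_mono_null (fun s ⟨hs, hlt⟩ => ?_) hu'
      refine ⟨hs, ?_⟩
      linarith [hdiff s hs, (hy s hs).2.2]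
  have h0 : (ηl + ηu') 0 ≤ (ηu + ηl') 0 := by
    simp [hl0 0 le_rfl, hu0 0 le_rfl, hl0' 0 le_rfl, hu0' 0 le_rfl]
  linarith [hdiff t ht, StieltjesFunction.le_of_measure_lt_eq_zero _ _ h0 ht hnull]

theorem skorohodSolution_unique_general (α β x y η y' η' : ℝ → ℝ)
    (hsol : IsSkorohodSolution α β x y η)
    (hsol' : IsSkorohodSolution α β x y' η') :
    ∀ t : ℝ, 0 ≤ t → y t = y' t ∧ η t = η' t := by
  intro t ht
  have hy : y t = y' t := le_antisymm (hsol.le hsol' ht) (hsol'.le hsol ht)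
  exact ⟨hy, by linarith [(hsol.2.2.1 t ht).1, (hsol'.2.2.1 t ht).1]⟩

/-- Uniqueness for the Skorohod problem with two time-dependent boundaries:
two solutions `(y, η)` and `(y', η')` for the same input `x` coincide. -/
theorem skorohodSolution_unique (α β x y η y' η' : ℝ → ℝ)
    (hα : Cadlag α) (hβ : Cadlag β) (hx : Cadlag x)
    (hle : ∀ t : ℝ, 0 ≤ t → α t ≤ β t)
    (hgap : 0 < sInf ((fun t => β t - α t) '' Set.Ici (0 : ℝ)))
    (hsol : IsSkorohodSolution α β x y η)
    (hsol' : IsSkorohodSolution α β x y' η') :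
    ∀ t : ℝ, 0 ≤ t → y t = y' t ∧ η t = η' t :=
  skorohodSolution_unique_general α β x y η y' η' hsol hsol'
end

section
/- Let T > 0 and 0 ≤ t ≤ T. Let L, y¹, y² : [0,T] → ℝ be continuous functions with y¹_r ≥ L_r and y²_r ≥ L_r for all r, and let k¹, k² : [0,T] → ℝ be continuous nondecreasing functions with k¹_0 = k²_0 = 0 whose Lebesgue–Stieltjes measures satisfy ∫_{[t,T]} (y¹_r − L_r) dk¹_r = 0 and ∫_{[t,T]} (y²_r − L_r) dk²_r = 0. Then ∫_{[t,T]} (y¹_r − y²_r) d(k¹ − k²)_r ≤ 0, i.e., ∫_{[t,T]} (y¹_r − y²_r) dk¹_r ≤ ∫_{[t,T]} (y¹_r − y²_r) dk²_r. -/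
open Set MeasureTheory

theorem setIntegral_sub_nonpos_of_skorohod {μ : Measure ℝ} {s : Set ℝ} (hs : MeasurableSet s)
    {L y y' : ℝ → ℝ} (hy : IntegrableOn (fun r => y r - L r) s μ)
    (hy' : IntegrableOn (fun r => y' r - L r) s μ) (hy'L : ∀ r ∈ s, L r ≤ y' r)
    (hmin : ∫ r in s, (y r - L r) ∂μ = 0) :
    ∫ r in s, (y r - y' r) ∂μ ≤ 0 := by
  have hsplit : ∫ r in s, (y r - y' r) ∂μ =
      (∫ r in s, (y r - L r) ∂μ) - ∫ r in s, (y' r - L r) ∂μ := by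
    rw [← integral_sub hy hy']
    simp only [sub_sub_sub_cancel_right]
  have hnonneg : 0 ≤ ∫ r in s, (y' r - L r) ∂μ :=
    setIntegral_nonneg hs fun r hr => sub_nonneg.2 (hy'L r hr)
  linarith

theorem lower_barrier_skorohod_integral_le_general (T t : ℝ) (ht : 0 ≤ t)
    (L y1 y2 : ℝ → ℝ)
    (hL : ContinuousOn L (Set.Icc 0 T))
    (hy1 : ContinuousOn y1 (Set.Icc 0 T))
    (hy2 : ContinuousOn y2 (Set.Icc 0 T))
    (hy1L : ∀ r ∈ Set.Icc (0 : ℝ) T, L r ≤ y1 r)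
    (hy2L : ∀ r ∈ Set.Icc (0 : ℝ) T, L r ≤ y2 r)
    (k1 k2 : StieltjesFunction ℝ)
    (hmin1 : ∫ r in Set.Icc t T, (y1 r - L r) ∂k1.measure = 0)
    (hmin2 : ∫ r in Set.Icc t T, (y2 r - L r) ∂k2.measure = 0) :
    ∫ r in Set.Icc t T, (y1 r - y2 r) ∂k1.measure ≤
      ∫ r in Set.Icc t T, (y1 r - y2 r) ∂k2.measure := by
  have hsub : Icc t T ⊆ Icc 0 T := Icc_subset_Icc_left ht
  have h1 : ContinuousOn (fun r => y1 r - L r) (Icc t T) := (hy1.sub hL).mono hsub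
  have h2 : ContinuousOn (fun r => y2 r - L r) (Icc t T) := (hy2.sub hL).mono hsub
  have hk1 : ∫ r in Icc t T, (y1 r - y2 r) ∂k1.measure ≤ 0 :=
    setIntegral_sub_nonpos_of_skorohod measurableSet_Icc h1.integrableOn_Icc h2.integrableOn_Icc
      (fun r hr => hy2L r (hsub hr)) hmin1
  have hk2 : ∫ r in Icc t T, (y2 r - y1 r) ∂k2.measure ≤ 0 :=
    setIntegral_sub_nonpos_of_skorohod measurableSet_Icc h2.integrableOn_Icc h1.integrableOn_Icc
      (fun r hr => hy1L r (hsub hr)) hmin2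
  have hswap : ∫ r in Icc t T, (y1 r - y2 r) ∂k2.measure =
      -∫ r in Icc t T, (y2 r - y1 r) ∂k2.measure := by
    rw [← integral_neg]
    simp only [neg_sub]
  linarith

/-- If `y¹, y²` are continuous paths above a continuous lower barrier `L` on `[0,T]`,
and `k¹, k²` are continuous nondecreasing functions starting at `0` whose
Lebesgue–Stieltjes measures satisfy the Skorohod minimality conditions
`∫_{[t,T]} (yⁱ - L) dkⁱ = 0`, then
`∫_{[t,T]} (y¹ - y²) dk¹ ≤ ∫_{[t,T]} (y¹ - y²) dk²`. -/
theorem lower_barrier_skorohod_integral_le (T t : ℝ) (hT : 0 < T) (ht : 0 ≤ t) (htT : t ≤ T)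
    (L y1 y2 : ℝ → ℝ)
    (hL : ContinuousOn L (Set.Icc 0 T))
    (hy1 : ContinuousOn y1 (Set.Icc 0 T))
    (hy2 : ContinuousOn y2 (Set.Icc 0 T))
    (hy1L : ∀ r ∈ Set.Icc (0 : ℝ) T, L r ≤ y1 r)
    (hy2L : ∀ r ∈ Set.Icc (0 : ℝ) T, L r ≤ y2 r)
    (k1 k2 : StieltjesFunction ℝ)
    (hk1c : ContinuousOn (⇑k1) (Set.Icc 0 T))
    (hk2c : ContinuousOn (⇑k2) (Set.Icc 0 T))
    (hk10 : k1 0 = 0) (hk20 : k2 0 = 0)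
    (hmin1 : ∫ r in Set.Icc t T, (y1 r - L r) ∂k1.measure = 0)
    (hmin2 : ∫ r in Set.Icc t T, (y2 r - L r) ∂k2.measure = 0) :
    ∫ r in Set.Icc t T, (y1 r - y2 r) ∂k1.measure ≤
      ∫ r in Set.Icc t T, (y1 r - y2 r) ∂k2.measure :=
  lower_barrier_skorohod_integral_le_general T t ht L y1 y2 hL hy1 hy2 hy1L hy2L k1 k2 hmin1 hmin2
end

section
/- Let T > 0 and 0 ≤ t ≤ T. Let U, y¹, y² : [0,T] → ℝ be continuous functions with y¹_r ≤ U_r and y²_r ≤ U_r for all r, and let k¹, k² : [0,T] → ℝ be continuous nondecreasing functions with k¹_0 = k²_0 = 0 whose Lebesgue–Stieltjes measures satisfy ∫_{[t,T]} (U_r − y¹_r) dk¹_r = 0 and ∫_{[t,T]} (U_r − y²_r) dk²_r = 0. Then ∫_{[t,T]} (y¹_r − y²_r) d(k¹ − k²)_r ≥ 0, i.e., ∫_{[t,T]} (y¹_r − y²_r) dk¹_r ≥ ∫_{[t,T]} (y¹_r − y²_r) dk²_r. -/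
open Set MeasureTheory

/- Writing `y¹ - y² = (U - y²) - (U - y¹)`, the minimality condition for `k¹` kills the second
term against `dk¹`, leaving `∫ (U - y²) dk¹ ≥ 0`; symmetrically `∫ (y¹ - y²) dk² = -∫ (U - y¹) dk² ≤ 0`. -/

theorem setIntegral_sub_nonneg_of_le_of_setIntegral_eq_zero {α : Type*} [MeasurableSpace α]
    {μ : Measure α} {s : Set α} (hs : MeasurableSet s) {U y₁ y₂ : α → ℝ}
    (h₁ : IntegrableOn (fun r => U r - y₁ r) s μ) (h₂ : IntegrableOn (fun r => U r - y₂ r) s μ)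
    (hy₂ : ∀ r ∈ s, y₂ r ≤ U r) (hmin : ∫ r in s, (U r - y₁ r) ∂μ = 0) :
    0 ≤ ∫ r in s, (y₁ r - y₂ r) ∂μ :=
  calc 0 ≤ ∫ r in s, (U r - y₂ r) ∂μ := setIntegral_nonneg hs fun r hr => sub_nonneg.2 (hy₂ r hr)
    _ = (∫ r in s, (U r - y₂ r) ∂μ) - ∫ r in s, (U r - y₁ r) ∂μ := by rw [hmin, sub_zero]
    _ = ∫ r in s, ((U r - y₂ r) - (U r - y₁ r)) ∂μ := (integral_sub h₂ h₁).symm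
    _ = ∫ r in s, (y₁ r - y₂ r) ∂μ := by simp only [sub_sub_sub_cancel_left]

theorem upper_barrier_skorohod_integral_ge_general (T t : ℝ) (ht : 0 ≤ t)
    (U y1 y2 : ℝ → ℝ)
    (hU : ContinuousOn U (Set.Icc 0 T))
    (hy1 : ContinuousOn y1 (Set.Icc 0 T))
    (hy2 : ContinuousOn y2 (Set.Icc 0 T))
    (hy1U : ∀ r ∈ Set.Icc (0 : ℝ) T, y1 r ≤ U r)
    (hy2U : ∀ r ∈ Set.Icc (0 : ℝ) T, y2 r ≤ U r)
    (k1 k2 : StieltjesFunction ℝ)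
    (hmin1 : ∫ r in Set.Icc t T, (U r - y1 r) ∂k1.measure = 0)
    (hmin2 : ∫ r in Set.Icc t T, (U r - y2 r) ∂k2.measure = 0) :
    ∫ r in Set.Icc t T, (y1 r - y2 r) ∂k2.measure ≤
      ∫ r in Set.Icc t T, (y1 r - y2 r) ∂k1.measure := by
  have hsub : Icc t T ⊆ Icc 0 T := Icc_subset_Icc_left ht
  have hint : ∀ (μ : Measure ℝ) [IsLocallyFiniteMeasure μ] (y : ℝ → ℝ),
      ContinuousOn y (Icc 0 T) → IntegrableOn (fun r => U r - y r) (Icc t T) μ :=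
    fun _ _ _ hy => ((hU.sub hy).mono hsub).integrableOn_Icc
  have h1 : 0 ≤ ∫ r in Icc t T, (y1 r - y2 r) ∂k1.measure :=
    setIntegral_sub_nonneg_of_le_of_setIntegral_eq_zero measurableSet_Icc
      (hint _ y1 hy1) (hint _ y2 hy2) (fun r hr => hy2U r (hsub hr)) hmin1
  have h2 : 0 ≤ ∫ r in Icc t T, (y2 r - y1 r) ∂k2.measure :=
    setIntegral_sub_nonneg_of_le_of_setIntegral_eq_zero measurableSet_Icc
      (hint _ y2 hy2) (hint _ y1 hy1) (fun r hr => hy1U r (hsub hr)) hmin2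
  have hneg : ∫ r in Icc t T, (y1 r - y2 r) ∂k2.measure
      = -∫ r in Icc t T, (y2 r - y1 r) ∂k2.measure := by
    rw [← integral_neg]; simp only [neg_sub]
  linarith

/-- If `y¹, y²` are continuous paths below a continuous upper barrier `U` on `[0,T]`,
and `k¹, k²` are continuous nondecreasing functions starting at `0` whose
Lebesgue–Stieltjes measures satisfy the Skorohod minimality conditions
`∫_{[t,T]} (U - yⁱ) dkⁱ = 0`, then
`∫_{[t,T]} (y¹ - y²) dk¹ ≥ ∫_{[t,T]} (y¹ - y²) dk²`. -/
theorem upper_barrier_skorohod_integral_ge (T t : ℝ) (hT : 0 < T) (ht : 0 ≤ t) (htT : t ≤ T)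
    (U y1 y2 : ℝ → ℝ)
    (hU : ContinuousOn U (Set.Icc 0 T))
    (hy1 : ContinuousOn y1 (Set.Icc 0 T))
    (hy2 : ContinuousOn y2 (Set.Icc 0 T))
    (hy1U : ∀ r ∈ Set.Icc (0 : ℝ) T, y1 r ≤ U r)
    (hy2U : ∀ r ∈ Set.Icc (0 : ℝ) T, y2 r ≤ U r)
    (k1 k2 : StieltjesFunction ℝ)
    (hk1c : ContinuousOn (⇑k1) (Set.Icc 0 T))
    (hk2c : ContinuousOn (⇑k2) (Set.Icc 0 T))
    (hk10 : k1 0 = 0) (hk20 : k2 0 = 0)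
    (hmin1 : ∫ r in Set.Icc t T, (U r - y1 r) ∂k1.measure = 0)
    (hmin2 : ∫ r in Set.Icc t T, (U r - y2 r) ∂k2.measure = 0) :
    ∫ r in Set.Icc t T, (y1 r - y2 r) ∂k2.measure ≤
      ∫ r in Set.Icc t T, (y1 r - y2 r) ∂k1.measure :=
  upper_barrier_skorohod_integral_ge_general T t ht U y1 y2 hU hy1 hy2 hy1U hy2U k1 k2 hmin1 hmin2
end
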